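/- arXiv:2512.20791 — 2 statements merged into one kernel-verified Lean document; each statement's English description precedes it below -/
import Mathlib

section
/- Assume dom(g) is a closed convex nonempty subset of Z, F : Z → Z is continuous and monotone on dom(g), and the solution set S := zer(F+∂g) of HVI(F,g) is nonempty and weakly sharp with modulus τ > 0, i.e. for every z* ∈ S one has τ·B(0,1) ⊆ F(z*) + ∂g(z*) + [T_{dom(g)}(z*) ∩ N_S(z*)]°. Then Θ(z | F,g,dom(g)) ≥ τ·dist(z,S) for all z ∈ dom(g). -/
noncomputable section

open scoped RealInnerProductSpace
open Filter Topology

variable {Z : Type*} [NormedAddCommGroup Z] [InnerProductSpace ℝ Z] [CompleteSpace Z]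

/-- Effective domain of an extended-real-valued function. -/
def edom {Z : Type*} (g : Z → EReal) : Set Z := {z | g z < ⊤}

/-- `g` is proper, convex and lower semicontinuous. -/
structure ProperConvexLsc (g : Z → EReal) : Prop where
  ne_bot : ∀ z, g z ≠ ⊥
  proper : ∃ z, g z < ⊤
  convex : ∀ x y : Z, ∀ a b : ℝ, 0 ≤ a → 0 ≤ b → a + b = 1 →
    g (a • x + b • y) ≤ (a : EReal) * g x + (b : EReal) * g y
  lsc : LowerSemicontinuous g

/-- Monotonicity of an operator on a real Hilbert space. -/
def IsMonotoneOp (F : Z → Z) : Prop := ∀ x y : Z, 0 ≤ ⟪F x - F y, x - y⟫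

/-- Lipschitz continuity with (real) constant `L`. -/
def IsLipOp (L : ℝ) (F : Z → Z) : Prop := ∀ x y : Z, ‖F x - F y‖ ≤ L * ‖x - y‖

/-- The bifunction `H^{(F,g)}(z,y) = ⟪F y, z - y⟫ + g z - g y`. -/
def Hb (F : Z → Z) (g : Z → EReal) (z y : Z) : EReal :=
  ((⟪F y, z - y⟫ : ℝ) : EReal) + g z - g y

/-- The localized dual gap function `Θ(z | F,g,C)`. -/
def gapFn (F : Z → Z) (g : Z → EReal) (C : Set Z) (z : Z) : EReal :=
  ⨆ y ∈ C, Hb F g z y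

/-- The convex subdifferential of an extended-real-valued function. -/
def subdiff (g : Z → EReal) (x : Z) : Set Z :=
  {ξ : Z | ∀ y : Z, ((⟪ξ, y - x⟫ : ℝ) : EReal) + g x ≤ g y}

/-- The solution set `zer(F + ∂g)`. -/
def zerFg (F : Z → Z) (g : Z → EReal) : Set Z := {z : Z | -F z ∈ subdiff g z}

/-- The normal cone to a set `C` at `z`. -/
def normalCone (C : Set Z) (z : Z) : Set Z :=
  {ξ : Z | z ∈ C ∧ ∀ z' ∈ C, ⟪ξ, z' - z⟫ ≤ 0}

/-- The solution set `zer(F + ∂g + N_C)`. -/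
def zerFgN (F : Z → Z) (g : Z → EReal) (C : Set Z) : Set Z :=
  {z : Z | ∃ ξ ∈ subdiff g z, ∃ p ∈ normalCone C z, F z + ξ + p = 0}

/-- The solution set `S₁` of problem (P): points of `S₂` solving the upper HVI over `S₂`. -/
def solP (F₁ : Z → Z) (g₁ : Z → EReal) (S₂ : Set Z) : Set Z :=
  {zs : Z | zs ∈ S₂ ∧ ∀ u ∈ S₂, 0 ≤ Hb F₁ g₁ u zs}

/-- `(α,ρ)`-weak sharpness of the solution set `S` of `HVI(F,g)`. -/
def WeakSharp (F : Z → Z) (g : Z → EReal) (S : Set Z) (α ρ : ℝ) : Prop :=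
  ∀ zs ∈ S, ∀ z ∈ edom g,
    (((α / ρ) * Metric.infDist z S ^ ρ : ℝ) : EReal) ≤ Hb F g z zs

/-- Support function of a set. -/
def suppFn (p : Z) (C : Set Z) : EReal := ⨆ z ∈ C, ((⟪p, z⟫ : ℝ) : EReal)

/-- The Fitzpatrick-type function `φ^{(F,g)}(z,u)`. -/
def phiFn (F : Z → Z) (g : Z → EReal) (z u : Z) : EReal :=
  ⨆ y ∈ edom g, (Hb F g z y + ((⟪y, u⟫ : ℝ) : EReal))

/-- `x = prox_{τ G}(u)`, via the variational characterization
`⟪u - x, v - x⟫ ≤ τ (G v - G x)` for all `v`. -/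
def IsProx (τ : ℝ) (G : Z → EReal) (u x : Z) : Prop :=
  ∀ v : Z, ((⟪u - x, v - x⟫ : ℝ) : EReal) ≤ (τ : EReal) * (G v - G x)

/-- The Tikhonov-regularized operator `V_k = F₂ + σ_k F₁`. -/
def Vop (F₁ F₂ : Z → Z) (σ : ℕ → ℝ) (k : ℕ) (x : Z) : Z := F₂ x + σ k • F₁ x

/-- The Tikhonov-regularized function `G_k = g₂ + σ_k g₁`. -/
def Gfun (g₁ g₂ : Z → EReal) (σ : ℕ → ℝ) (k : ℕ) (v : Z) : EReal :=
  g₂ v + ((σ k : ℝ) : EReal) * g₁ v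

/-- The Attouch–Czarnecki summability condition. -/
def ACcond (F₂ : Z → Z) (g₂ : Z → EReal) (S₂ : Set Z) (t σ : ℕ → ℝ) : Prop :=
  ∀ p : Z, (∃ zs : Z, p ∈ normalCone S₂ zs) →
    ∃ M : ℝ, ∀ K : ℕ,
      (∑ k ∈ Finset.Icc 1 K,
        ((t k : ℝ) : EReal) * ((⨆ zs ∈ S₂, phiFn F₂ g₂ zs (σ k • p)) - suppFn (σ k • p) S₂))
        ≤ (M : EReal)

/-- `T_K = ∑_{k=1}^K t_k`. -/
def Tsum (t : ℕ → ℝ) (K : ℕ) : ℝ := ∑ k ∈ Finset.Icc 1 K, t k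

/-- The ergodic average `z̄^K` (here `w k` plays the role of `z^{k+1/2}`). -/
def zbar (t : ℕ → ℝ) (w : ℕ → Z) (K : ℕ) : Z :=
  (Tsum t K)⁻¹ • ∑ k ∈ Finset.Icc 1 K, t k • w k

/-- Weights `γ_k = 1/∏_{i=1}^k (1 - t_i σ_i μ)` (so `γ_0 = 1`). -/
def gammaW (t σ : ℕ → ℝ) (μ : ℝ) (k : ℕ) : ℝ :=
  (∏ i ∈ Finset.Icc 1 k, (1 - t i * σ i * μ))⁻¹

/-- The weighted ergodic average used in the strongly monotone case. -/
def zbarW (t σ : ℕ → ℝ) (μ : ℝ) (w : ℕ → Z) (K : ℕ) : Z :=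
  (∑ i ∈ Finset.Icc 1 K, t i * σ i * gammaW t σ μ i)⁻¹ •
    ∑ i ∈ Finset.Icc 1 K, (t i * σ i * gammaW t σ μ i) • w i

/-- Convex tangent cone `T_C(x) = cl(⋃_{λ>0} (C - x)/λ)`. -/
def tangentConeCvx (C : Set Z) (x : Z) : Set Z :=
  closure {v : Z | ∃ lam : ℝ, 0 < lam ∧ ∃ c ∈ C, v = lam⁻¹ • (c - x)}

/-- Polar cone of a set. -/
def polarCone (K : Set Z) : Set Z := {z : Z | ∀ x ∈ K, ⟪z, x⟫ ≤ 0}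

/-!
The solution set `S` equals the set of Minty solutions `{z | H(z, y) ≤ 0 for all y ∈ dom g}`:
monotonicity gives one inclusion, and letting `y` slide to `z` along a segment (continuity of `F`,
convexity of `g`) the other. As an intersection of closed convex sets, `S` admits a metric
projection `v` of `z`, and `z - v` lies in `T_{dom g}(v) ∩ N_S(v)`. Testing the weak-sharpness
inclusion at `v` with `b = (z - v)/‖z - v‖` against `z - v` gives
`τ ‖z - v‖ ≤ ⟪F v + ξ, z - v⟫ ≤ H(z, v) ≤ Θ(z)`.
-/

section

omit [CompleteSpace Z]

lemma mem_edom_of_coe_add_le {E : Type*} {g : E → EReal} {y z : E} {r : ℝ} (hy : y ∈ edom g)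
    (h : (r : EReal) + g z ≤ g y) : z ∈ edom g := by
  by_contra hz
  rw [edom, Set.mem_ofPred_eq, not_lt_top_iff] at hz
  rw [hz, EReal.coe_add_top] at h
  exact hy.ne (top_le_iff.mp h)

lemma mem_edom_of_mem_subdiff {g : Z → EReal} {x ξ : Z} (hg : (edom g).Nonempty)
    (hξ : ξ ∈ subdiff g x) : x ∈ edom g :=
  mem_edom_of_coe_add_le hg.some_mem (hξ _)

namespace ProperConvexLsc

variable {g : Z → EReal} (hg : ProperConvexLsc g)
include hg

lemma coe_toReal {z : Z} (hz : z ∈ edom g) : ((g z).toReal : EReal) = g z :=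
  EReal.coe_toReal hz.ne (hg.ne_bot z)

lemma coe_add_le_iff {y z : Z} (hy : y ∈ edom g) (hz : z ∈ edom g) {r : ℝ} :
    (r : EReal) + g z ≤ g y ↔ r + (g z).toReal ≤ (g y).toReal := by
  rw [← EReal.coe_le_coe_iff, EReal.coe_add, hg.coe_toReal hy, hg.coe_toReal hz]

lemma convexOn_toReal (hdom : Convex ℝ (edom g)) :
    ConvexOn ℝ (edom g) fun z ↦ (g z).toReal := by
  refine ⟨hdom, fun x hx y hy a b ha hb hab ↦ ?_⟩
  have h := hg.convex x y a b ha hb hab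
  rw [← hg.coe_toReal hx, ← hg.coe_toReal hy, ← hg.coe_toReal (hdom hx hy ha hb hab)] at h
  exact_mod_cast h

end ProperConvexLsc

lemma Hb_eq_coe {F : Z → Z} {g : Z → EReal} (hg : ProperConvexLsc g) {y z : Z}
    (hz : z ∈ edom g) (hy : y ∈ edom g) :
    Hb F g z y = ((⟪F y, z - y⟫ + (g z).toReal - (g y).toReal : ℝ) : EReal) := by
  rw [Hb, ← hg.coe_toReal hz, ← hg.coe_toReal hy]
  norm_cast

lemma Hb_le_gapFn (F : Z → Z) (g : Z → EReal) {C : Set Z} {y : Z} (hy : y ∈ C) (z : Z) :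
    Hb F g z y ≤ gapFn F g C z :=
  le_iSup₂ (f := fun y (_ : y ∈ C) ↦ Hb F g z y) y hy

lemma sub_mem_tangentConeCvx {C : Set Z} {x z : Z} (hz : z ∈ C) :
    z - x ∈ tangentConeCvx C x :=
  subset_closure ⟨1, one_pos, z, hz, by rw [inv_one, one_smul]⟩

lemma real_inner_inv_norm_smul_self (x : Z) : ⟪‖x‖⁻¹ • x, x⟫ = ‖x‖ := by
  rw [real_inner_smul_self_left]
  rcases eq_or_ne ‖x‖ 0 with h | h
  · simp [h]
  · rw [inv_mul_cancel_left₀ h]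

def mintySet (F : Z → Z) (g : Z → EReal) : Set Z :=
  {z : Z | ∀ y ∈ edom g, ((⟪F y, z - y⟫ : ℝ) : EReal) + g z ≤ g y}

variable {F : Z → Z} {g : Z → EReal}

lemma mintySet_subset_edom (hne : (edom g).Nonempty) : mintySet F g ⊆ edom g :=
  fun _ hz ↦ mem_edom_of_coe_add_le hne.some_mem (hz _ hne.some_mem)

lemma mintySet_isClosed (hg : LowerSemicontinuous g) : IsClosed (mintySet F g) := by
  have hlsc (y : Z) : LowerSemicontinuous fun z ↦ ((⟪F y, z - y⟫ : ℝ) : EReal) + g z := by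
    refine LowerSemicontinuous.add' ?_ hg fun z ↦ EReal.continuousAt_add
      (Or.inl (EReal.coe_ne_top _)) (Or.inl (EReal.coe_ne_bot _))
    exact (continuous_coe_real_ereal.comp (by fun_prop)).lowerSemicontinuous
  have hset : mintySet F g = ⋂ y ∈ edom g,
      (fun z ↦ ((⟪F y, z - y⟫ : ℝ) : EReal) + g z) ⁻¹' Set.Iic (g y) := by
    ext z
    simp only [mintySet, Set.mem_iInter, Set.mem_preimage, Set.mem_Iic, Set.mem_ofPred_eq]
  rw [hset]
  exact isClosed_biInter fun y _ ↦ (hlsc y).isClosed_preimage (g y)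

lemma mintySet_convex (hg : ProperConvexLsc g) (hdom : Convex ℝ (edom g)) :
    Convex ℝ (mintySet F g) := by
  have hset : mintySet F g = edom g ∩ ⋂ y ∈ edom g,
      {z | z ∈ edom g ∧ ⟪F y, z - y⟫ + (g z).toReal ≤ (g y).toReal} := by
    ext z
    simp only [Set.mem_inter_iff, Set.mem_iInter, Set.mem_ofPred_eq]
    refine ⟨fun hz ↦ ?_, fun ⟨hz, h⟩ y hy ↦ (hg.coe_add_le_iff hy hz).2 (h y hy).2⟩
    have hzd := mintySet_subset_edom hg.proper hz
    exact ⟨hzd, fun y hy ↦ ⟨hzd, (hg.coe_add_le_iff hy hzd).1 (hz y hy)⟩⟩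
  rw [hset]
  refine hdom.inter (convex_iInter₂ fun y _ ↦ ConvexOn.convex_le ?_ _)
  have haff : ConvexOn ℝ (edom g) fun z ↦ ⟪F y, z - y⟫ := by
    refine (((innerₗ Z (F y)).convexOn hdom).add_const (-⟪F y, y⟫)).congr fun z _ ↦ ?_
    simp [sub_eq_add_neg, inner_add_right]
  exact haff.add (hg.convexOn_toReal hdom)

theorem stampacchia_of_minty {C : Set Z} {φ : Z → ℝ} (hφ : ConvexOn ℝ C φ)
    (hF : ContinuousOn F C) {z : Z} (hz : z ∈ C)
    (hminty : ∀ y ∈ C, ⟪F y, z - y⟫ + φ z ≤ φ y) {y : Z} (hy : y ∈ C) :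
    ⟪F z, z - y⟫ + φ z ≤ φ y := by
  set w : ℝ → Z := fun t ↦ z + t • (y - z)
  have hwC {t : ℝ} (ht : t ∈ Set.Ioc 0 1) : w t ∈ C :=
    hφ.1.add_smul_sub_mem hz hy (Set.Ioc_subset_Icc_self ht)
  -- Minty's inequality at `w t`, combined with convexity of `φ` on `[z, y]` and divided by `t`.
  have hbound {t : ℝ} (ht : t ∈ Set.Ioc 0 1) : ⟪F (w t), z - y⟫ ≤ φ y - φ z := by
    have hcvx : φ (w t) ≤ (1 - t) * φ z + t * φ y := by
      have hw : w t = (1 - t) • z + t • y := by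
        simp only [w, smul_sub, sub_smul, one_smul]; abel
      rw [hw]
      exact hφ.2 hz hy (by linarith [ht.2]) ht.1.le (by ring)
    have hinner : ⟪F (w t), z - w t⟫ = t * ⟪F (w t), z - y⟫ := by
      rw [← real_inner_smul_right]; congr 1; simp only [w, smul_sub]; abel
    have := hminty _ (hwC ht)
    nlinarith [ht.1]
  have hlim : Tendsto (fun t ↦ ⟪F (w t), z - y⟫) (𝓝[>] 0) (𝓝 ⟪F z, z - y⟫) := by
    have hw : Tendsto w (𝓝[>] 0) (𝓝[C] z) := by
      refine tendsto_nhdsWithin_iff.2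
        ⟨?_, eventually_of_mem (Ioc_mem_nhdsGT one_pos) fun t ht ↦ hwC ht⟩
      have h0 : Tendsto w (𝓝 0) (𝓝 z) := by
        simpa [w] using (show Continuous w by fun_prop).tendsto 0
      exact h0.mono_left nhdsWithin_le_nhds
    exact ((hF z hz).tendsto.comp hw).inner tendsto_const_nhds
  have := le_of_tendsto hlim (eventually_of_mem (Ioc_mem_nhdsGT one_pos) fun t ht ↦ hbound ht)
  linarith

lemma zerFg_subset_mintySet (hne : (edom g).Nonempty)
    (hF : ∀ x ∈ edom g, ∀ y ∈ edom g, 0 ≤ ⟪F x - F y, x - y⟫) :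
    zerFg F g ⊆ mintySet F g := by
  intro z hz y hy
  have hmono := hF z (mem_edom_of_mem_subdiff hne hz) y hy
  refine le_trans (add_le_add_left ?_ (g z)) (hz y)
  rw [EReal.coe_le_coe_iff, inner_neg_left]
  simp only [inner_sub_left, inner_sub_right] at hmono ⊢
  linarith

lemma mintySet_subset_zerFg (hg : ProperConvexLsc g) (hdom : Convex ℝ (edom g))
    (hF : ContinuousOn F (edom g)) : mintySet F g ⊆ zerFg F g := by
  intro z hz y
  have hzd := mintySet_subset_edom hg.proper hz
  by_cases hy : y ∈ edom g
  · rw [hg.coe_add_le_iff hy hzd, ← inner_neg_neg, neg_neg, neg_sub]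
    exact stampacchia_of_minty (hg.convexOn_toReal hdom) hF hzd
      (fun y hy ↦ (hg.coe_add_le_iff hy hzd).1 (hz y hy)) hy
  · rw [edom, Set.mem_ofPred_eq, not_lt_top_iff] at hy
    exact hy ▸ le_top

end

lemma exists_sub_mem_normalCone {S : Set Z} (hne : S.Nonempty) (hcl : IsClosed S)
    (hcvx : Convex ℝ S) (z : Z) : ∃ v ∈ S, z - v ∈ normalCone S v := by
  obtain ⟨v, hv, hmin⟩ := exists_norm_eq_iInf_of_complete_convex hne hcl.isComplete hcvx z
  exact ⟨v, hv, hv, (norm_eq_iInf_iff_real_inner_le_zero hcvx hv).1 hmin⟩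

theorem weakSharp_implies_errorBound_general
    (F : Z → Z) (g : Z → EReal) (τ : ℝ) (hτ : 0 < τ)
    (hg : ProperConvexLsc g)
    (hdom_cvx : Convex ℝ (edom g))
    (hFcont : ContinuousOn F (edom g))
    (hFmono : ∀ x ∈ edom g, ∀ y ∈ edom g, 0 ≤ ⟪F x - F y, x - y⟫)
    (hSne : (zerFg F g).Nonempty)
    (hsharp : ∀ zs ∈ zerFg F g, ∀ b : Z, ‖b‖ ≤ 1 →
      ∃ ξ ∈ subdiff g zs,
        ∃ p ∈ polarCone (tangentConeCvx (edom g) zs ∩ normalCone (zerFg F g) zs),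
          τ • b = F zs + ξ + p) :
    ∀ z ∈ edom g,
      ((τ * Metric.infDist z (zerFg F g) : ℝ) : EReal) ≤ gapFn F g (edom g) z := by
  intro z hz
  have hS : zerFg F g = mintySet F g := (zerFg_subset_mintySet hg.proper hFmono).antisymm
    (mintySet_subset_zerFg hg hdom_cvx hFcont)
  obtain ⟨v, hvS, hvN⟩ := exists_sub_mem_normalCone hSne (hS ▸ mintySet_isClosed hg.lsc)
    (hS ▸ mintySet_convex hg hdom_cvx) z
  have hv : v ∈ edom g := mem_edom_of_mem_subdiff hg.proper hvS
  obtain ⟨ξ, hξ, p, hp, hτb⟩ := hsharp v hvS (‖z - v‖⁻¹ • (z - v))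
    (mem_closedBall_zero_iff.1 (inv_norm_smul_mem_unitClosedBall _))
  have hpv : ⟪p, z - v⟫ ≤ 0 := hp _ ⟨sub_mem_tangentConeCvx hz, hvN⟩
  have hξv : ⟪ξ, z - v⟫ + (g v).toReal ≤ (g z).toReal := (hg.coe_add_le_iff hz hv).1 (hξ z)
  have hsharp_v : τ * ‖z - v‖ ≤ ⟪F v, z - v⟫ + (g z).toReal - (g v).toReal := by
    have := congrArg (⟪·, z - v⟫) hτb
    rw [real_inner_smul_left, real_inner_inv_norm_smul_self, inner_add_left, inner_add_left] at this
    linarith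
  have hdist : Metric.infDist z (zerFg F g) ≤ ‖z - v‖ :=
    (Metric.infDist_le_dist_of_mem hvS).trans_eq (dist_eq_norm z v)
  calc ((τ * Metric.infDist z (zerFg F g) : ℝ) : EReal)
      ≤ ((⟪F v, z - v⟫ + (g z).toReal - (g v).toReal : ℝ) : EReal) :=
        EReal.coe_le_coe ((mul_le_mul_of_nonneg_left hdist hτ.le).trans hsharp_v)
    _ = Hb F g z v := (Hb_eq_coe hg hz hv).symm
    _ ≤ gapFn F g (edom g) z := Hb_le_gapFn F g hv z

/-- weak sharpness of the solution set implies the error bound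
`Θ(z | F,g,dom g) ≥ τ · dist(z, S)` on `dom(g)`. -/
theorem weakSharp_implies_errorBound
    (F : Z → Z) (g : Z → EReal) (τ : ℝ) (hτ : 0 < τ)
    (hg : ProperConvexLsc g)
    (hdom_closed : IsClosed (edom g)) (hdom_cvx : Convex ℝ (edom g))
    (hdom_ne : (edom g).Nonempty)
    (hFcont : ContinuousOn F (edom g))
    (hFmono : ∀ x ∈ edom g, ∀ y ∈ edom g, 0 ≤ ⟪F x - F y, x - y⟫)
    (hSne : (zerFg F g).Nonempty)
    (hsharp : ∀ zs ∈ zerFg F g, ∀ b : Z, ‖b‖ ≤ 1 →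
      ∃ ξ ∈ subdiff g zs,
        ∃ p ∈ polarCone (tangentConeCvx (edom g) zs ∩ normalCone (zerFg F g) zs),
          τ • b = F zs + ξ + p) :
    ∀ z ∈ edom g,
      ((τ * Metric.infDist z (zerFg F g) : ℝ) : EReal) ≤ gapFn F g (edom g) z :=
  weakSharp_implies_errorBound_general F g τ hτ hg hdom_cvx hFcont hFmono hSne hsharp

end
end

section
/- Assume the data assumptions and constraint qualification of problem (P), the step conditions 8 t_k² L_k² ≤ 1 with (σ_k) nonincreasing, σ_k → 0, Σ_k t_k = ∞ and Σ_k t_k σ_k < ∞, and the Attouch–Czarnecki condition. Let z* ∈ S₁ be arbitrary and define W_k(z*) := E_k(z*) + D_k. Then for the optimistic extragradient iterates: (a) lim_{k→∞} W_k(z*) exists in ℝ; (b) lim_{k→∞} ‖z^{k+1/2} − z^k‖ = 0; (c) the sequences (z^k) and (z^{k+1/2}) are bounded. -/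
/-!
By the constraint qualification, `z* ∈ S₁` comes with `ξ ∈ ∂g₁(z*)` and `p ∈ N_{S₂}(z*)` such
that `F₁ z* + ξ + p = 0`. Testing the prox inequalities of step `k` at `z^{k+1}` and at `z*`, and
bounding the extrapolation error `V_k(z^{k-1/2}) - V_k(z^{k+1/2})` by Lipschitz continuity and
`8 t_k² L_k² ≤ 1`, gives
`W_{k+1} + ¼‖z^{k+1/2} - z^k‖² ≤ W_k + ε_k`, where `ε_k` is the positive part of
`t_k H^{(V_k,G_k)}(z*, z^{k+1/2})`. Monotonicity of `F₁` and the subgradient inequality bound the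
`σ_k`-part of this gap by `σ_k ⟪p, z^{k+1/2} - z*⟫`, so `ε_k` is dominated by the `k`-th
Attouch–Czarnecki term and `(ε_k)` is summable. Quasi-Fejér monotonicity of `W_k` then gives its
convergence, `‖z^{k+1/2} - z^k‖ → 0`, and boundedness of both sequences.
-/

noncomputable section

open scoped RealInnerProductSpace
open Filter Topology

variable {Z : Type*} [NormedAddCommGroup Z] [InnerProductSpace ℝ Z] [CompleteSpace Z]

section Prox

variable {E : Type*} [NormedAddCommGroup E] [InnerProductSpace ℝ E]
  {τ : ℝ} {G : E → EReal} {u x : E}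

theorem IsProx.ne_top (hτ : 0 < τ) (h : IsProx τ G u x) : G x ≠ ⊤ := by
  intro htop
  have h0 := h x
  rw [htop, EReal.sub_top, EReal.coe_mul_bot_of_pos hτ] at h0
  exact EReal.coe_ne_bot _ (le_bot_iff.mp h0)

theorem IsProx.inner_le (hτ : 0 < τ) (hG : ∀ y, G y ≠ ⊥) (h : IsProx τ G u x) {v : E}
    (hv : G v ≠ ⊤) : ⟪u - x, v - x⟫ ≤ τ * ((G v).toReal - (G x).toReal) := by
  have hv' := h v
  rw [← EReal.coe_toReal hv (hG v), ← EReal.coe_toReal (h.ne_top hτ) (hG x),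
    ← EReal.coe_sub, ← EReal.coe_mul] at hv'
  exact_mod_cast hv'

theorem IsProx.norm_sub_le (hτ : 0 < τ) (hG : ∀ y, G y ≠ ⊥) (h : IsProx τ G u x) {u' x' : E}
    (h' : IsProx τ G u' x') : ‖x' - x‖ ≤ ‖u' - u‖ := by
  have h₁ := h.inner_le hτ hG (h'.ne_top hτ)
  have h₂ := h'.inner_le hτ hG (h.ne_top hτ)
  have hfirm : ‖x' - x‖ ^ 2 ≤ ⟪u' - u, x' - x⟫ := by
    have e₁ : u' - u = (u' - x') - (u - x) + (x' - x) := by abel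
    have e₂ : x - x' = -(x' - x) := by abel
    rw [e₂, inner_neg_right] at h₂
    rw [e₁, inner_add_left, inner_sub_left, real_inner_self_eq_norm_sq]
    linarith
  have hcs := real_inner_le_norm (u' - u) (x' - x)
  nlinarith [norm_nonneg (x' - x), norm_nonneg (u' - u)]

/-- Sum of the prox inequalities of the half-steps `w = prox(z - τ a)` and `z' = prox(z - τ b)`,
tested at `z'` and at `zs` respectively. -/
theorem IsProx.optimistic_three_point (hτ : 0 < τ) (hG : ∀ y, G y ≠ ⊥) {z z' w a b zs : E}
    (hw : IsProx τ G (z - τ • a) w) (hz : IsProx τ G (z - τ • b) z') (hzs : G zs ≠ ⊤) :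
    1 / 2 * ‖z' - zs‖ ^ 2 + 1 / 2 * ‖z - w‖ ^ 2 ≤ 1 / 2 * ‖z - zs‖ ^ 2
      + τ * (⟪b, zs - w⟫ + (G zs).toReal - (G w).toReal) + τ ^ 2 / 2 * ‖b - a‖ ^ 2 := by
  have hw' := hw.inner_le hτ hG (hz.ne_top hτ)
  have hz' := hz.inner_le hτ hG hzs
  rw [sub_right_comm, inner_sub_left, real_inner_smul_left] at hw' hz'
  have pol₁ := norm_sub_sq_real (z - w) (z' - w)
  have pol₂ := norm_sub_sq_real (z - z') (zs - z')
  rw [sub_sub_sub_cancel_right] at pol₁ pol₂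
  have hsplit : ⟪b, zs - z'⟫ + ⟪a, z' - w⟫ = ⟪b, zs - w⟫ + ⟪b - a, w - z'⟫ := by
    rw [← sub_add_sub_cancel zs w z', inner_add_right, ← neg_sub w z', inner_neg_right,
      inner_sub_left]
    ring
  have hcs := mul_le_mul_of_nonneg_left (real_inner_le_norm (b - a) (w - z')) hτ.le
  have hyoung : τ * (‖b - a‖ * ‖w - z'‖) ≤ τ ^ 2 / 2 * ‖b - a‖ ^ 2 + 1 / 2 * ‖w - z'‖ ^ 2 := by
    nlinarith [sq_nonneg (τ * ‖b - a‖ - ‖w - z'‖)]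
  rw [norm_sub_rev z' w] at pol₁
  rw [norm_sub_rev zs z'] at pol₂
  linear_combination hw' + hz' - pol₁ / 2 - pol₂ / 2 + τ * hsplit + hcs + hyoung

theorem IsProx.optimistic_step (hτ : 0 < τ) (hG : ∀ y, G y ≠ ⊥) {V : E → E} {L : ℝ}
    (hV : IsLipOp L V) (hstep : 8 * τ ^ 2 * L ^ 2 ≤ 1) {z z' w w₀ zs : E}
    (hw : IsProx τ G (z - τ • V w₀) w) (hz : IsProx τ G (z - τ • V w) z') (hzs : G zs ≠ ⊤) :
    1 / 2 * ‖z' - zs‖ ^ 2 + τ ^ 2 / 2 * ‖V w₀ - V w‖ ^ 2 + 1 / 4 * ‖w - z‖ ^ 2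
      ≤ 1 / 2 * ‖z - zs‖ ^ 2 + 1 / 4 * ‖z - w₀‖ ^ 2
        + τ * (⟪V w, zs - w⟫ + (G zs).toReal - (G w).toReal) := by
  have h3 := hw.optimistic_three_point hτ hG hz hzs
  have hlip : ‖V w - V w₀‖ ^ 2 ≤ L ^ 2 * ‖w - w₀‖ ^ 2 := by
    rw [← mul_pow]
    exact pow_le_pow_left₀ (norm_nonneg _) (hV w w₀) 2
  have htri : ‖w - w₀‖ ^ 2 ≤ 2 * ‖w - z‖ ^ 2 + 2 * ‖z - w₀‖ ^ 2 := by
    nlinarith [norm_sub_le_norm_sub_add_norm_sub w z w₀, norm_nonneg (w - w₀),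
      sq_nonneg (‖w - z‖ - ‖z - w₀‖)]
  have hL : τ ^ 2 * ‖V w - V w₀‖ ^ 2 ≤ 1 / 4 * ‖w - z‖ ^ 2 + 1 / 4 * ‖z - w₀‖ ^ 2 := by
    nlinarith [mul_le_mul_of_nonneg_left hlip (sq_nonneg τ), sq_nonneg (τ * L),
      mul_le_mul_of_nonneg_left htri (sq_nonneg (τ * L))]
  rw [norm_sub_rev (V w₀)]
  rw [norm_sub_rev z w] at h3
  linarith

end Prox

section OptimisticExtragradient

variable {E : Type*} [NormedAddCommGroup E] [InnerProductSpace ℝ E]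
  {V : ℕ → E → E} {G : ℕ → E → EReal} {t L D : ℕ → ℝ} {z w : ℕ → E}

theorem optimistic_norm_sub_sq_le (ht : ∀ k, 0 < t k) (hG : ∀ k y, G k y ≠ ⊥)
    (hinit : w 0 = z 1)
    (hw : ∀ k ≥ 1, IsProx (t k) (G k) (z k - t k • V k (w (k - 1))) (w k))
    (hz : ∀ k ≥ 1, IsProx (t k) (G k) (z k - t k • V k (w k)) (z (k + 1)))
    (hD1 : D 1 = 0)
    (hD : ∀ k ≥ 2, D k = t (k - 1) ^ 2 / 2 * ‖V (k - 1) (w (k - 2)) - V (k - 1) (w (k - 1))‖ ^ 2)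
    {k : ℕ} (hk : 1 ≤ k) : ‖z k - w (k - 1)‖ ^ 2 ≤ 2 * D k := by
  obtain rfl | ⟨j, rfl⟩ : k = 1 ∨ ∃ j, k = j + 2 := by
    rcases Nat.exists_eq_add_of_le hk with ⟨_ | j, rfl⟩
    exacts [Or.inl rfl, Or.inr ⟨j, by omega⟩]
  · simp [hinit, hD1]
  · have hnonexp := (hw (j + 1) le_add_self).norm_sub_le (ht _) (hG _) (hz (j + 1) le_add_self)
    simp only [add_tsub_cancel_right, sub_sub_sub_cancel_left, ← smul_sub, norm_smul,
      Real.norm_of_nonneg (ht _).le] at hnonexp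
    have hsq := pow_le_pow_left₀ (norm_nonneg _) hnonexp 2
    rw [mul_pow] at hsq
    rw [hD (j + 2) le_add_self]
    simp only [show j + 2 - 1 = j + 1 by omega, add_tsub_cancel_right]
    linarith

theorem optimistic_energy_descent (ht : ∀ k, 0 < t k) (hG : ∀ k y, G k y ≠ ⊥)
    (hV : ∀ k ≥ 1, IsLipOp (L k) (V k)) (hstep : ∀ k ≥ 1, 8 * t k ^ 2 * L k ^ 2 ≤ 1)
    (hinit : w 0 = z 1)
    (hw : ∀ k ≥ 1, IsProx (t k) (G k) (z k - t k • V k (w (k - 1))) (w k))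
    (hz : ∀ k ≥ 1, IsProx (t k) (G k) (z k - t k • V k (w k)) (z (k + 1)))
    (hD1 : D 1 = 0)
    (hD : ∀ k ≥ 2, D k = t (k - 1) ^ 2 / 2 * ‖V (k - 1) (w (k - 2)) - V (k - 1) (w (k - 1))‖ ^ 2)
    {zs : E} (hzs : ∀ k, G k zs ≠ ⊤) {k : ℕ} (hk : 1 ≤ k) :
    1 / 2 * ‖z (k + 1) - zs‖ ^ 2 + D (k + 1) + 1 / 4 * ‖w k - z k‖ ^ 2
      ≤ 1 / 2 * ‖z k - zs‖ ^ 2 + D k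
        + t k * (⟪V k (w k), zs - w k⟫ + (G k zs).toReal - (G k (w k)).toReal) := by
  have hstep' := (hw k hk).optimistic_step (ht k) (hG k) (hV k hk) (hstep k hk) (hz k hk) (hzs k)
  have hprev := optimistic_norm_sub_sq_le ht hG hinit hw hz hD1 hD hk
  rw [hD (k + 1) (by omega), show k + 1 - 2 = k - 1 by omega, add_tsub_cancel_right]
  linarith [sq_nonneg ‖z k - w (k - 1)‖]

end OptimisticExtragradient

theorem isLipOp_Vop {E : Type*} [NormedAddCommGroup E] [InnerProductSpace ℝ E] {F₁ F₂ : E → E}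
    {σ : ℕ → ℝ} {k : ℕ} {L₁ L₂ : ℝ} (h₁ : IsLipOp L₁ F₁) (h₂ : IsLipOp L₂ F₂) (hσ : 0 ≤ σ k) :
    IsLipOp (L₂ + σ k * L₁) (Vop F₁ F₂ σ k) := by
  intro x y
  have hsplit : Vop F₁ F₂ σ k x - Vop F₁ F₂ σ k y = (F₂ x - F₂ y) + σ k • (F₁ x - F₁ y) := by
    simp only [Vop, smul_sub]
    abel
  rw [hsplit, add_mul, mul_assoc]
  refine (norm_add_le _ _).trans (add_le_add (h₂ x y) ?_)
  rw [norm_smul, Real.norm_of_nonneg hσ]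
  exact mul_le_mul_of_nonneg_left (h₁ x y) hσ

theorem EReal.coe_mul_ne_bot {c : ℝ} (hc : 0 ≤ c) {a : EReal} (ha : a ≠ ⊥) : (c : EReal) * a ≠ ⊥ :=
  (EReal.mul_ne_bot _ _).mpr ⟨Or.inl (EReal.coe_ne_bot c), Or.inr ha, Or.inl (EReal.coe_ne_top c),
    Or.inl (EReal.coe_nonneg.mpr hc)⟩

section Regularization

variable {E : Type*} {g₁ g₂ : E → EReal} {σ : ℕ → ℝ} {k : ℕ}

theorem Gfun_ne_bot (hg₁ : ∀ y, g₁ y ≠ ⊥) (hg₂ : ∀ y, g₂ y ≠ ⊥) (hσ : 0 ≤ σ k) (x : E) :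
    Gfun g₁ g₂ σ k x ≠ ⊥ :=
  EReal.add_ne_bot_iff.mpr ⟨hg₂ x, EReal.coe_mul_ne_bot hσ (hg₁ x)⟩

theorem Gfun_ne_top_iff (hg₁ : ∀ y, g₁ y ≠ ⊥) (hg₂ : ∀ y, g₂ y ≠ ⊥) (hσ : 0 < σ k) {x : E} :
    Gfun g₁ g₂ σ k x ≠ ⊤ ↔ g₁ x ≠ ⊤ ∧ g₂ x ≠ ⊤ := by
  rw [Gfun, EReal.add_ne_top_iff_ne_top₂ (hg₂ x) (EReal.coe_mul_ne_bot hσ.le (hg₁ x)), and_comm,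
    EReal.mul_ne_top]
  simp [hσ.le, hσ.not_ge, hg₁ x]

theorem Gfun_toReal {x : E} (hx₁ : g₁ x ≠ ⊤) (hx₁' : g₁ x ≠ ⊥) (hx₂ : g₂ x ≠ ⊤) (hx₂' : g₂ x ≠ ⊥) :
    (Gfun g₁ g₂ σ k x).toReal = (g₂ x).toReal + σ k * (g₁ x).toReal := by
  rw [Gfun, ← EReal.coe_toReal hx₁ hx₁', ← EReal.coe_toReal hx₂ hx₂', ← EReal.coe_mul,
    ← EReal.coe_add, EReal.toReal_coe, EReal.toReal_coe, EReal.toReal_coe]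

end Regularization

section Solutions

variable {E : Type*} [NormedAddCommGroup E] [InnerProductSpace ℝ E]

theorem ne_top_of_mem_subdiff {g : E → EReal} (hg : ∃ y, g y < ⊤) {x ξ : E}
    (hξ : ξ ∈ subdiff g x) : g x ≠ ⊤ := by
  intro htop
  obtain ⟨y, hy⟩ := hg
  have h := hξ y
  rw [htop, EReal.coe_add_top] at h
  exact hy.ne (top_le_iff.mp h)

theorem IsMonotoneOp.bifun_le_inner {F : E → E} {g : E → EReal} (hF : IsMonotoneOp F)
    (hg : ∀ y, g y ≠ ⊥) {x ξ p : E} (hξ : ξ ∈ subdiff g x) (hsum : F x + ξ + p = 0)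
    (hx : g x ≠ ⊤) {b : E} (hb : g b ≠ ⊤) :
    ⟪F b, x - b⟫ + (g x).toReal - (g b).toReal ≤ ⟪p, b - x⟫ := by
  have hmono := hF x b
  have hsub := hξ b
  rw [← EReal.coe_toReal hx (hg x), ← EReal.coe_toReal hb (hg b), ← EReal.coe_add,
    EReal.coe_le_coe_iff] at hsub
  have hFx : ⟪F x, x - b⟫ = ⟪ξ, b - x⟫ + ⟪p, b - x⟫ := by
    rw [eq_neg_of_add_eq_zero_left ((add_assoc _ _ _).symm.trans hsum), inner_neg_left,
      ← inner_neg_right, neg_sub, inner_add_left]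
  rw [inner_sub_left] at hmono
  linarith

theorem suppFn_smul_of_mem_normalCone {C : Set E} {x p : E} {c : ℝ} (hc : 0 ≤ c)
    (hp : p ∈ normalCone C x) : suppFn (c • p) C = ((⟪c • p, x⟫ : ℝ) : EReal) := by
  refine le_antisymm (iSup₂_le fun y hy => EReal.coe_le_coe_iff.mpr ?_)
    (le_iSup₂ (f := fun y (_ : y ∈ C) => ((⟪c • p, y⟫ : ℝ) : EReal)) x hp.1)
  have hpy := hp.2 y hy
  rw [inner_sub_right] at hpy
  rw [real_inner_smul_left, real_inner_smul_left]
  nlinarith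

theorem coe_le_phiFn {F : E → E} {g : E → EReal} (hg : ∀ y, g y ≠ ⊥) {x b : E} (hx : g x ≠ ⊤)
    (hb : g b ≠ ⊤) (u : E) :
    ((⟪F b, x - b⟫ + (g x).toReal - (g b).toReal + ⟪b, u⟫ : ℝ) : EReal) ≤ phiFn F g x u := by
  refine le_iSup₂_of_le (f := fun y (_ : y ∈ edom g) => Hb F g x y + ((⟪y, u⟫ : ℝ) : EReal))
    b hb.lt_top (le_of_eq ?_)
  rw [Hb, ← EReal.coe_toReal hx (hg x), ← EReal.coe_toReal hb (hg b)]
  norm_cast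

/-- The `F₁`-part of the gap is absorbed by the normal-cone direction `p`, the `F₂`-part by `φ`. -/
theorem coe_max_gap_le_phiFn_sub_suppFn {F₁ F₂ : E → E} {g₁ g₂ : E → EReal} {σ : ℕ → ℝ} {k : ℕ}
    (hF₁ : IsMonotoneOp F₁) (hg₁ : ∀ y, g₁ y ≠ ⊥) (hg₂ : ∀ y, g₂ y ≠ ⊥) {C : Set E}
    {zs ξ p : E} (hξ : ξ ∈ subdiff g₁ zs) (hp : p ∈ normalCone C zs) (hsum : F₁ zs + ξ + p = 0)
    (hzs₁ : g₁ zs ≠ ⊤) (hzs₂ : g₂ zs ≠ ⊤) {τ : ℝ} (hτ : 0 ≤ τ) (hσ : 0 ≤ σ k) {x : E}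
    (hx₁ : g₁ x ≠ ⊤) (hx₂ : g₂ x ≠ ⊤) :
    ((max (τ * (⟪Vop F₁ F₂ σ k x, zs - x⟫ + (Gfun g₁ g₂ σ k zs).toReal
        - (Gfun g₁ g₂ σ k x).toReal)) 0 : ℝ) : EReal)
      ≤ τ * ((⨆ y ∈ C, phiFn F₂ g₂ y (σ k • p)) - suppFn (σ k • p) C) := by
  have hlower : ∀ b, g₂ b ≠ ⊤ → ((⟪F₂ b, zs - b⟫ + (g₂ zs).toReal - (g₂ b).toReal
      + ⟪b, σ k • p⟫ - ⟪σ k • p, zs⟫ : ℝ) : EReal)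
        ≤ (⨆ y ∈ C, phiFn F₂ g₂ y (σ k • p)) - suppFn (σ k • p) C := fun b hb => by
    rw [EReal.coe_sub, suppFn_smul_of_mem_normalCone hσ hp]
    exact EReal.sub_le_sub ((coe_le_phiFn hg₂ hzs₂ hb _).trans
      (le_iSup₂ (f := fun y (_ : y ∈ C) => phiFn F₂ g₂ y (σ k • p)) zs hp.1)) le_rfl
  have hX : (0 : EReal) ≤ (⨆ y ∈ C, phiFn F₂ g₂ y (σ k • p)) - suppFn (σ k • p) C := by
    simpa [real_inner_comm zs] using hlower zs hzs₂
  have hgap : ⟪Vop F₁ F₂ σ k x, zs - x⟫ + (Gfun g₁ g₂ σ k zs).toReal - (Gfun g₁ g₂ σ k x).toReal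
      ≤ ⟪F₂ x, zs - x⟫ + (g₂ zs).toReal - (g₂ x).toReal + ⟪x, σ k • p⟫ - ⟪σ k • p, zs⟫ := by
    have hupper := mul_le_mul_of_nonneg_left (hF₁.bifun_le_inner hg₁ hξ hsum hzs₁ hx₁) hσ
    rw [inner_sub_right p x zs, real_inner_comm x p] at hupper
    rw [Gfun_toReal hzs₁ (hg₁ zs) hzs₂ (hg₂ zs), Gfun_toReal hx₁ (hg₁ x) hx₂ (hg₂ x), Vop,
      inner_add_left, real_inner_smul_left, real_inner_smul_right, real_inner_smul_left]
    linarith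
  rw [EReal.coe_strictMono.monotone.map_max, EReal.coe_zero, EReal.coe_mul]
  exact max_le (mul_le_mul_of_nonneg_left ((EReal.coe_le_coe_iff.mpr hgap).trans (hlower x hx₂))
    (EReal.coe_nonneg.mpr hτ)) (mul_nonneg (EReal.coe_nonneg.mpr hτ) hX)

end Solutions

theorem summable_of_coe_le_of_sum_Icc_le {ε : ℕ → ℝ} {a : ℕ → EReal} {M : ℝ}
    (hε : ∀ k, 0 ≤ ε k) (hle : ∀ k ≥ 1, (ε k : EReal) ≤ a k)
    (hM : ∀ K, ∑ k ∈ Finset.Icc 1 K, a k ≤ M) : Summable ε := by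
  refine (summable_nat_add_iff 1).mp <|
    summable_of_sum_range_le (c := M) (fun k => hε (k + 1)) fun n => ?_
  have hcast : ((∑ k ∈ Finset.Icc 1 n, ε k : ℝ) : EReal) = ∑ k ∈ Finset.Icc 1 n, (ε k : EReal) :=
    map_sum (⟨⟨Real.toEReal, EReal.coe_zero⟩, EReal.coe_add⟩ : ℝ →+ EReal) _ _
  rw [Finset.range_eq_Ico, Finset.sum_Ico_add', zero_add, Finset.Ico_add_one_right_eq_Icc,
    ← EReal.coe_le_coe_iff, hcast]
  exact (Finset.sum_le_sum fun k hk => hle k (Finset.mem_Icc.mp hk).1).trans (hM n)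

/-- Quasi-Fejér monotonicity: `W k - ∑_{i<k} ε i` is antitone and bounded below. -/
theorem exists_tendsto_of_le_add_of_summable {W ε : ℕ → ℝ} (hW : ∀ k, 0 ≤ W k)
    (hε : Summable ε) (hε0 : ∀ k, 0 ≤ ε k) (hstep : ∀ k, W (k + 1) ≤ W k + ε k) :
    ∃ l, Tendsto W atTop (𝓝 l) := by
  set U : ℕ → ℝ := fun k => W k - ∑ i ∈ Finset.range k, ε i
  have hU : Antitone U := antitone_nat_of_succ_le fun k => by
    simp only [U, Finset.sum_range_succ]
    linarith [hstep k]
  have hUbdd : BddBelow (Set.range U) := ⟨-∑' i, ε i, by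
    rintro _ ⟨k, rfl⟩
    linarith [hW k, hε.sum_le_tsum (Finset.range k) fun i _ => hε0 i]⟩
  refine ⟨_, ((tendsto_atTop_ciInf hU hUbdd).add hε.tendsto_sum_tsum_nat).congr fun k => ?_⟩
  simp only [U, sub_add_cancel]

theorem tendsto_zero_of_add_le_add_of_summable {W s ε : ℕ → ℝ} {l : ℝ}
    (hW : Tendsto W atTop (𝓝 l)) (hε : Summable ε) (hs : ∀ k, 0 ≤ s k)
    (hstep : ∀ k, W (k + 1) + s k ≤ W k + ε k) : Tendsto s atTop (𝓝 0) := by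
  have hlim : Tendsto (fun k => W k - W (k + 1) + ε k) atTop (𝓝 (l - l + 0)) :=
    (hW.sub ((tendsto_add_atTop_iff_nat 1).mpr hW)).add hε.tendsto_atTop_zero
  rw [sub_self, zero_add] at hlim
  exact squeeze_zero hs (fun k => by linarith [hstep k]) hlim

theorem exists_forall_norm_le_of_tendsto {E : Type*} [NormedAddCommGroup E] {z w : ℕ → E}
    {zs : E} {D : ℕ → ℝ} {l : ℝ} (hW : Tendsto (fun k => 1 / 2 * ‖z k - zs‖ ^ 2 + D k) atTop (𝓝 l))
    (hD : ∀ k ≥ 1, 0 ≤ D k) (hwz : Tendsto (fun k => ‖w k - z k‖) atTop (𝓝 0)) :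
    ∃ R, ∀ k, ‖z k‖ ≤ R ∧ ‖w k‖ ≤ R := by
  have hev : ∀ᶠ k in atTop, max ‖z k‖ ‖w k‖ ≤ ‖zs‖ + √(2 * (l + 1)) + 1 := by
    filter_upwards [hW.eventually (eventually_lt_nhds (lt_add_one l)),
      hwz.eventually (eventually_lt_nhds one_pos), eventually_ge_atTop 1] with k hWk hwk hk
    have hzk : ‖z k - zs‖ ≤ √(2 * (l + 1)) := Real.le_sqrt_of_sq_le (by linarith [hD k hk])
    have hz : ‖z k‖ ≤ ‖zs‖ + √(2 * (l + 1)) := by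
      linarith [norm_le_norm_add_norm_sub' (z k) zs]
    have hw : ‖w k‖ ≤ ‖w k - z k‖ + ‖z k‖ := norm_le_norm_sub_add (w k) (z k)
    exact max_le (by linarith) (by linarith)
  obtain ⟨R, hR⟩ := (isBoundedUnder_of_eventually_le hev).bddAbove_range
  exact ⟨R, fun k => max_le_iff.mp (hR ⟨k, rfl⟩)⟩

theorem optimistic_extragradient_opial_general
    (F₁ F₂ : Z → Z) (LF₁ LF₂ : ℝ) (g₁ g₂ : Z → EReal)
    (hF₁m : IsMonotoneOp F₁)
    (hF₁L : IsLipOp LF₁ F₁) (hF₂L : IsLipOp LF₂ F₂)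
    (hg₁ : ProperConvexLsc g₁) (hg₂ : ProperConvexLsc g₂)
    (hCQ : solP F₁ g₁ (zerFg F₂ g₂) = zerFgN F₁ g₁ (zerFg F₂ g₂))
    (σ t : ℕ → ℝ) (hσpos : ∀ k, 0 < σ k) (htpos : ∀ k, 0 < t k)
    (hstep : ∀ k ≥ 1, 8 * t k ^ 2 * (LF₂ + σ k * LF₁) ^ 2 ≤ 1)
    (hAC : ACcond F₂ g₂ (zerFg F₂ g₂) t σ)
    (z w : ℕ → Z) (hinit : w 0 = z 1)
    (hw : ∀ k ≥ 1, IsProx (t k) (Gfun g₁ g₂ σ k)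
      (z k - t k • Vop F₁ F₂ σ k (w (k - 1))) (w k))
    (hz : ∀ k ≥ 1, IsProx (t k) (Gfun g₁ g₂ σ k)
      (z k - t k • Vop F₁ F₂ σ k (w k)) (z (k + 1)))
    (D : ℕ → ℝ) (hD1 : D 1 = 0)
    (hD : ∀ k ≥ 2, D k = t (k - 1) ^ 2 / 2 *
      ‖Vop F₁ F₂ σ (k - 1) (w (k - 2)) - Vop F₁ F₂ σ (k - 1) (w (k - 1))‖ ^ 2)
    (zs : Z) (hzs : zs ∈ solP F₁ g₁ (zerFg F₂ g₂)) :
    (∃ l : ℝ, Tendsto (fun k => 1 / 2 * ‖z k - zs‖ ^ 2 + D k) atTop (nhds l)) ∧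
    (Tendsto (fun k => ‖w k - z k‖) atTop (nhds 0)) ∧
    (∃ R : ℝ, ∀ k : ℕ, ‖z k‖ ≤ R ∧ ‖w k‖ ≤ R) := by
  obtain ⟨ξ, hξ, p, hp, hsum⟩ : zs ∈ zerFgN F₁ g₁ (zerFg F₂ g₂) := hCQ ▸ hzs
  have hzs₁ : g₁ zs ≠ ⊤ := ne_top_of_mem_subdiff hg₁.proper hξ
  have hzs₂ : g₂ zs ≠ ⊤ := ne_top_of_mem_subdiff hg₂.proper hp.1
  have hG k : ∀ y, Gfun g₁ g₂ σ k y ≠ ⊥ := Gfun_ne_bot hg₁.ne_bot hg₂.ne_bot (hσpos k).le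
  have hGfin {k x} : Gfun g₁ g₂ σ k x ≠ ⊤ ↔ g₁ x ≠ ⊤ ∧ g₂ x ≠ ⊤ :=
    Gfun_ne_top_iff hg₁.ne_bot hg₂.ne_bot (hσpos k)
  set W : ℕ → ℝ := fun k => 1 / 2 * ‖z k - zs‖ ^ 2 + D k
  set ε : ℕ → ℝ := fun k => max (t k * (⟪Vop F₁ F₂ σ k (w k), zs - w k⟫
    + (Gfun g₁ g₂ σ k zs).toReal - (Gfun g₁ g₂ σ k (w k)).toReal)) 0
  have hdesc (k : ℕ) : W (k + 2) + 1 / 4 * ‖w (k + 1) - z (k + 1)‖ ^ 2 ≤ W (k + 1) + ε (k + 1) :=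
    (optimistic_energy_descent htpos hG (fun k _ => isLipOp_Vop hF₁L hF₂L (hσpos k).le) hstep
      hinit hw hz hD1 hD (fun _ => hGfin.mpr ⟨hzs₁, hzs₂⟩) le_add_self).trans
      (by gcongr; exact le_max_left _ _)
  obtain ⟨M, hM⟩ := hAC p ⟨zs, hp⟩
  have hε : Summable fun k => ε (k + 1) := (summable_nat_add_iff 1).mpr <|
    summable_of_coe_le_of_sum_Icc_le (fun _ => le_max_right _ _) (fun k hk =>
      have hwk := hGfin.mp ((hw k hk).ne_top (htpos k))
      coe_max_gap_le_phiFn_sub_suppFn hF₁m hg₁.ne_bot hg₂.ne_bot hξ hp hsum hzs₁ hzs₂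
        (htpos k).le (hσpos k).le hwk.1 hwk.2) hM
  have hDnn : ∀ k ≥ 1, 0 ≤ D k := fun k hk => by
    linarith [optimistic_norm_sub_sq_le htpos hG hinit hw hz hD1 hD hk, sq_nonneg ‖z k - w (k - 1)‖]
  obtain ⟨l, hl⟩ := exists_tendsto_of_le_add_of_summable (W := fun k => W (k + 1))
    (fun k => add_nonneg (by positivity) (hDnn (k + 1) le_add_self)) hε (fun _ => le_max_right _ _)
    fun k => by linarith [hdesc k, sq_nonneg ‖w (k + 1) - z (k + 1)‖]
  have hwz : Tendsto (fun k => ‖w k - z k‖) atTop (𝓝 0) := by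
    rw [← tendsto_add_atTop_iff_nat 1]
    have hs := tendsto_zero_of_add_le_add_of_summable hl hε (fun _ => by positivity) hdesc
    simpa [Real.sqrt_sq (norm_nonneg _)] using (hs.const_mul 4).sqrt
  have hW := (tendsto_add_atTop_iff_nat 1).mp hl
  exact ⟨⟨l, hW⟩, hwz, exists_forall_norm_le_of_tendsto hW hDnn hwz⟩

/-- under the Attouch–Czarnecki condition, the energy `W_k(z*) = E_k(z*) + D_k`
converges, successive half-steps vanish, and the iterates are bounded. -/
theorem optimistic_extragradient_opial
    (F₁ F₂ : Z → Z) (LF₁ LF₂ : ℝ) (g₁ g₂ : Z → EReal)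
    (hF₁m : IsMonotoneOp F₁) (hF₂m : IsMonotoneOp F₂)
    (hF₁L : IsLipOp LF₁ F₁) (hF₂L : IsLipOp LF₂ F₂)
    (hg₁ : ProperConvexLsc g₁) (hg₂ : ProperConvexLsc g₂)
    (hdom : (edom g₁ ∩ edom g₂).Nonempty)
    (hS₂ne : (zerFg F₂ g₂).Nonempty)
    (hCQ : solP F₁ g₁ (zerFg F₂ g₂) = zerFgN F₁ g₁ (zerFg F₂ g₂))
    (σ t : ℕ → ℝ) (hσpos : ∀ k, 0 < σ k) (hσdec : Antitone σ) (htpos : ∀ k, 0 < t k)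
    (hstep : ∀ k ≥ 1, 8 * t k ^ 2 * (LF₂ + σ k * LF₁) ^ 2 ≤ 1)
    (hσ0 : Tendsto σ atTop (nhds 0))
    (htdiv : ¬ Summable t)
    (htσ : Summable (fun k => t k * σ k))
    (hAC : ACcond F₂ g₂ (zerFg F₂ g₂) t σ)
    (z w : ℕ → Z) (hinit : w 0 = z 1)
    (hw : ∀ k ≥ 1, IsProx (t k) (Gfun g₁ g₂ σ k)
      (z k - t k • Vop F₁ F₂ σ k (w (k - 1))) (w k))
    (hz : ∀ k ≥ 1, IsProx (t k) (Gfun g₁ g₂ σ k)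
      (z k - t k • Vop F₁ F₂ σ k (w k)) (z (k + 1)))
    (D : ℕ → ℝ) (hD1 : D 1 = 0)
    (hD : ∀ k ≥ 2, D k = t (k - 1) ^ 2 / 2 *
      ‖Vop F₁ F₂ σ (k - 1) (w (k - 2)) - Vop F₁ F₂ σ (k - 1) (w (k - 1))‖ ^ 2)
    (zs : Z) (hzs : zs ∈ solP F₁ g₁ (zerFg F₂ g₂)) :
    (∃ l : ℝ, Tendsto (fun k => 1 / 2 * ‖z k - zs‖ ^ 2 + D k) atTop (nhds l)) ∧
    (Tendsto (fun k => ‖w k - z k‖) atTop (nhds 0)) ∧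
    (∃ R : ℝ, ∀ k : ℕ, ‖z k‖ ≤ R ∧ ‖w k‖ ≤ R) :=
  optimistic_extragradient_opial_general F₁ F₂ LF₁ LF₂ g₁ g₂ hF₁m hF₁L hF₂L hg₁ hg₂ hCQ σ t hσpos
    htpos hstep hAC z w hinit hw hz D hD1 hD zs hzs

end
end
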